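/- Fix m ≥ 1 and integers μ_k < ν_k (k = 1,…,m). Call a reduced paradiagram with no * entries a reduced vertex; the reduced vertices are exactly the m+1 words 0^j 1^{m−j}, j = 0,…,m. For an L-equivalence class A of reduced paradiagrams of length m, let v(A) be the set of reduced vertices δ' such that F(δ') ⊆ U(A). Then: (i) the map A ↦ v(A) is a bijection from the set of L-equivalence classes of reduced paradiagrams of length m onto the set of nonempty subsets of the m+1 reduced vertices; (ii) for any two L-classes A and B, if v(A) ∩ v(B) ≠ ∅ then U(A) ∩ U(B) = U(C), where C is the unique L-class with v(C) = v(A) ∩ v(B), and if v(A) ∩ v(B) = ∅ then U(A) ∩ U(B) = ∅; (iii) for every L-class A whose paradiagrams have k stars, the set U(A) ⊆ ℝ^m is homeomorphic to the closed cube [0,1]^k. -/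

import Mathlib

/-- The alphabet `{0, 1, *}` of paradiagrams. -/
inductive PD where
  | zero : PD
  | one : PD
  | star : PD
deriving DecidableEq

/-- A paradiagram is reduced if no entry `1` is immediately followed by an entry `0`. -/
def Reduced {m : ℕ} (δ : Fin m → PD) : Prop :=
  ∀ (j : ℕ) (h : j + 1 < m),
    ¬(δ ⟨j, Nat.lt_of_succ_lt h⟩ = PD.one ∧ δ ⟨j + 1, h⟩ = PD.zero)

/-- The face `F(δ) = {y ∈ Π : y_k = μ_k if δ_k = 0, y_k = ν_k if δ_k = 1}` of the
parallelepiped `Π = {y : μ_k ≤ y_k ≤ ν_k}`. -/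
def Face {m : ℕ} (μ ν : Fin m → ℤ) (δ : Fin m → PD) : Set (Fin m → ℝ) :=
  {y | ∀ k, ((μ k : ℝ) ≤ y k ∧ y k ≤ (ν k : ℝ)) ∧
            (δ k = PD.zero → y k = (μ k : ℝ)) ∧ (δ k = PD.one → y k = (ν k : ℝ))}

/-- An L-move replaces a consecutive pair of entries `(*, 0)` by `(1, *)`. -/
def LMove {m : ℕ} (δ δ' : Fin m → PD) : Prop :=
  ∃ (j : ℕ) (h : j + 1 < m),
    δ ⟨j, Nat.lt_of_succ_lt h⟩ = PD.star ∧ δ ⟨j + 1, h⟩ = PD.zero ∧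
    δ' ⟨j, Nat.lt_of_succ_lt h⟩ = PD.one ∧ δ' ⟨j + 1, h⟩ = PD.star ∧
    ∀ k : Fin m, (k : ℕ) ≠ j → (k : ℕ) ≠ j + 1 → δ' k = δ k

/-- L-equivalence: the equivalence relation generated by L-moves. -/
def LEquiv {m : ℕ} (δ δ' : Fin m → PD) : Prop := Relation.EqvGen LMove δ δ'

/-- An L-equivalence class of reduced paradiagrams. -/
def IsLClass {m : ℕ} (A : Set (Fin m → PD)) : Prop :=
  ∃ δ₀, Reduced δ₀ ∧ A = {δ | LEquiv δ₀ δ}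

/-- `U(A) = ⋃_{δ ∈ A} F(δ)`. -/
def UF {m : ℕ} (μ ν : Fin m → ℤ) (A : Set (Fin m → PD)) : Set (Fin m → ℝ) :=
  ⋃ δ ∈ A, Face μ ν δ

/-- The number of `*` entries of a paradiagram. -/
def stars {m : ℕ} (δ : Fin m → PD) : ℕ :=
  (Finset.univ.filter fun k => δ k = PD.star).card

/-- The size of the initial parabox: the number of leading `0` entries. -/
def initSize {m : ℕ} (δ : Fin m → PD) : ℕ :=
  ((List.ofFn δ).takeWhile (fun x => decide (x = PD.zero))).length

/-- The paramitosis of a paradiagram `δ` with initial parabox `0^a`: the set of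
paradiagrams obtained by replacing the initial segment `0^a` by `1^j * 0^{a−1−j}`
for `j = 0, …, a−1` (empty if `a = 0`). -/
def Mop {m : ℕ} (δ : Fin m → PD) : Set (Fin m → PD) :=
  {δ' | ∃ j : ℕ, j < initSize δ ∧ δ' = fun k : Fin m =>
      if k.val < j then PD.one
      else if k.val = j then PD.star
      else if k.val < initSize δ then PD.zero
      else δ k}

/-- Paramitosis of a set of paradiagrams. -/
def MSet {m : ℕ} (A : Set (Fin m → PD)) : Set (Fin m → PD) := ⋃ δ ∈ A, Mop δ

/-- `𝒮(S) = ∑_{y ∈ S ∩ ℤ^m} t^{σ(y)} ∈ ℤ[t,t⁻¹]`, where `σ(y) = y₁ + ⋯ + y_m`. -/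
noncomputable def charS {m : ℕ} (S : Set (Fin m → ℝ)) : LaurentPolynomial ℤ :=
  ∑ᶠ z ∈ {z : Fin m → ℤ | (fun k => (z k : ℝ)) ∈ S}, LaurentPolynomial.T (∑ k, z k)

/-- A reduced vertex: a reduced paradiagram with no `*` entries. -/
def RV {m : ℕ} (δ : Fin m → PD) : Prop := Reduced δ ∧ stars δ = 0

/-- `v(A)`: the set of reduced vertices `δ'` with `F(δ') ⊆ U(A)`. -/
def vset {m : ℕ} (μ ν : Fin m → ℤ) (A : Set (Fin m → PD)) : Set (Fin m → PD) :=
  {δ' | RV δ' ∧ Face μ ν δ' ⊆ UF μ ν A}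


/-!
Pad a paradiagram `δ` to the infinite word `0 δ₀ ⋯ δ_{m-1} 1 1 ⋯` and call `j ∈ [0, m]` a *cut*
of `δ` if the letter before position `j` is not `1` and the letter at `j` is not `0`. L-moves
preserve reducedness, the number of stars and the cut set, and undoing L-moves brings a reduced
word to a normal form determined by its cuts; so the L-classes are exactly the sets of reduced
words with a prescribed nonempty cut set `V ⊆ [0, m]`.

For `y ∈ Π` let `pattern y` record which coordinates sit at `μ` (`0`), at `ν` (`1`) or strictly
between (`*`). Then `y ∈ F(δ)` iff `pattern y` refines `δ`, refining can only shrink the cut set,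
and every word whose cuts lie in `V` refines a reduced word with cut set exactly `V`. Hence the
union `U(A)` over the class with cut set `V` is `{y ∈ Π | cuts (pattern y) ⊆ V}`; this makes (ii)
immediate, and since the vertex `0^j 1^{m-j}` has the single cut `j`, `v(A)` corresponds to `V`,
which gives (i).

For (iii), change coordinates affinely to the unit cube. Consecutive cuts bound windows, one for
each star of the normal form; outside the windows the coordinates of a point of `U(A)` are fixed,
and on a window they form a staircase `(1, …, 1, s, 0, …, 0)`. So the point is determined by its
averages over the windows, and these range freely over `[0, 1]`.
-/

namespace Paradiagram

open Finset

variable {m : ℕ}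

section Words

/-- `pad δ` is `0 δ₀ ⋯ δ_{m-1} 1 1 ⋯`, so that `δ k` sits at index `k + 1`. -/
def pad (δ : Fin m → PD) : ℕ → PD
  | 0 => .zero
  | p + 1 => if h : p < m then δ ⟨p, h⟩ else .one

@[simp] theorem pad_zero (δ : Fin m → PD) : pad δ 0 = .zero := rfl

theorem pad_succ (δ : Fin m → PD) {p : ℕ} (h : p < m) : pad δ (p + 1) = δ ⟨p, h⟩ := dif_pos h

theorem pad_val_succ (δ : Fin m → PD) (k : Fin m) : pad δ (k + 1) = δ k := pad_succ δ k.isLt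

theorem pad_of_lt (δ : Fin m → PD) {p : ℕ} (h : m < p) : pad δ p = .one := by
  obtain ⟨q, rfl⟩ : ∃ q, p = q + 1 := ⟨p - 1, by omega⟩
  exact dif_neg (by omega)

def ReducedWord (w : ℕ → PD) : Prop := ∀ p, ¬(w p = .one ∧ w (p + 1) = .zero)

theorem reduced_iff_reducedWord_pad {δ : Fin m → PD} : Reduced δ ↔ ReducedWord (pad δ) := by
  constructor
  · rintro h (_ | p) ⟨h1, h2⟩
    · cases h1
    · by_cases hp : p + 1 < m
      · rw [pad_succ δ (by omega)] at h1
        rw [pad_succ δ hp] at h2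
        exact h p hp ⟨h1, h2⟩
      · rw [pad_of_lt δ (by omega)] at h2
        cases h2
  · intro h j hj ⟨h1, h2⟩
    exact h (j + 1) ⟨by rwa [pad_succ δ (by omega)], by rwa [pad_succ δ hj]⟩

def IsCut (w : ℕ → PD) (j : ℕ) : Prop := w j ≠ .one ∧ w (j + 1) ≠ .zero

instance (w : ℕ → PD) : DecidablePred (IsCut w) := fun _ => inferInstanceAs (Decidable (_ ∧ _))

def cuts (δ : Fin m → PD) : Finset ℕ := (range (m + 1)).filter (IsCut (pad δ))

theorem mem_cuts {δ : Fin m → PD} {j : ℕ} : j ∈ cuts δ ↔ IsCut (pad δ) j := by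
  refine mem_filter.trans (and_iff_right_of_imp fun h => mem_range.2 ?_)
  by_contra hj
  exact h.1 (pad_of_lt δ (by omega))

theorem cuts_subset_range (δ : Fin m → PD) : cuts δ ⊆ range (m + 1) := filter_subset _ _

theorem exists_isCut_of_lt {w : ℕ → PD} {p q : ℕ} (hpq : p < q) (hp : w p ≠ .one)
    (hq : w q ≠ .zero) : ∃ j, p ≤ j ∧ j < q ∧ IsCut w j := by
  induction q, hpq using Nat.le_induction with
  | base => exact ⟨p, le_rfl, by omega, hp, hq⟩
  | succ q _ ih =>
    by_cases hq' : w q = .zero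
    · exact ⟨q, by omega, by omega, by simp [hq'], hq⟩
    · obtain ⟨j, h1, h2, h3⟩ := ih hq'
      exact ⟨j, h1, by omega, h3⟩

theorem exists_mem_of_cuts_subset {τ : Fin m → PD} {V : Finset ℕ} (hτ : cuts τ ⊆ V) {p q : ℕ}
    (hpq : p < q) (hp : pad τ p ≠ .one) (hq : pad τ q ≠ .zero) : ∃ x ∈ V, p ≤ x ∧ x < q := by
  obtain ⟨j, h1, h2, hj⟩ := exists_isCut_of_lt hpq hp hq
  exact ⟨j, hτ (mem_cuts.2 hj), h1, h2⟩

theorem cuts_nonempty (δ : Fin m → PD) : (cuts δ).Nonempty := by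
  obtain ⟨j, -, -, hj⟩ := exists_isCut_of_lt (Nat.succ_pos m) (by simp : pad δ 0 ≠ .one)
    (by simp [pad_of_lt δ (Nat.lt_succ_self m)])
  exact ⟨j, mem_cuts.2 hj⟩

def Refines (τ δ : Fin m → PD) : Prop := ∀ k, δ k ≠ .star → τ k = δ k

theorem cuts_subset_of_refines {τ δ : Fin m → PD} (h : Refines τ δ) : cuts τ ⊆ cuts δ := by
  have hpad : ∀ p, pad δ p ≠ .star → pad τ p = pad δ p := by
    rintro (_ | p) hp
    · rfl
    · by_cases hpm : p < m
      · simp only [pad_succ _ hpm] at hp ⊢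
        exact h _ hp
      · rw [pad_of_lt _ (by omega), pad_of_lt _ (by omega)]
  intro j hj
  rw [mem_cuts] at hj ⊢
  refine ⟨fun h1 => hj.1 ?_, fun h0 => hj.2 ?_⟩
  · rw [hpad j (by simp [h1]), h1]
  · rw [hpad _ (by simp [h0]), h0]

end Words

section LMoves

def IsLMoveAt (w w' : ℕ → PD) (p : ℕ) : Prop :=
  w p = .star ∧ w (p + 1) = .zero ∧ w' p = .one ∧ w' (p + 1) = .star ∧
    ∀ q, q ≠ p → q ≠ p + 1 → w' q = w q

variable {w w' : ℕ → PD} {p : ℕ} {δ δ' : Fin m → PD}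

theorem IsLMoveAt.reducedWord_iff (h : IsLMoveAt w w' p) : ReducedWord w' ↔ ReducedWord w := by
  obtain ⟨h1, h2, h3, h4, hoff⟩ := h
  refine forall_congr' fun q => not_congr ?_
  by_cases hq : q + 1 = p
  · subst hq
    simp [h1, h3]
  by_cases hq' : q = p
  · subst hq'
    simp [h1, h3, h4]
  by_cases hq'' : q = p + 1
  · subst hq''
    simp [h2, h4]
  rw [hoff q hq' hq'', hoff (q + 1) (by omega) (by omega)]

theorem IsLMoveAt.isCut_iff (h : IsLMoveAt w w' p) (j : ℕ) : IsCut w' j ↔ IsCut w j := by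
  obtain ⟨h1, h2, h3, h4, hoff⟩ := h
  unfold IsCut
  by_cases hj : j + 1 = p
  · subst hj
    rw [hoff j (by omega) (by omega)]
    simp [h1, h3]
  by_cases hj' : j = p
  · subst hj'
    simp [h2, h3]
  by_cases hj'' : j = p + 1
  · subst hj''
    rw [hoff (p + 1 + 1) (by omega) (by omega)]
    simp [h2, h4]
  rw [hoff j hj' hj'', hoff (j + 1) (by omega) (by omega)]

theorem _root_.LMove.isLMoveAt_pad (h : LMove δ δ') : ∃ p, IsLMoveAt (pad δ) (pad δ') p := by
  obtain ⟨j, hj, h1, h2, h3, h4, hoff⟩ := h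
  refine ⟨j + 1, ?_, ?_, ?_, ?_, ?_⟩
  · rwa [pad_succ δ (by omega)]
  · rwa [pad_succ δ hj]
  · rwa [pad_succ δ' (by omega)]
  · rwa [pad_succ δ' hj]
  · rintro (_ | q) hq hq'
    · rfl
    · by_cases hqm : q < m
      · rw [pad_succ _ hqm, pad_succ _ hqm]
        exact hoff _ (by simp; omega) (by simp; omega)
      · rw [pad_of_lt _ (by omega), pad_of_lt _ (by omega)]

theorem _root_.LMove.reduced_iff (h : LMove δ δ') : Reduced δ' ↔ Reduced δ := by
  obtain ⟨p, hp⟩ := h.isLMoveAt_pad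
  rw [reduced_iff_reducedWord_pad, reduced_iff_reducedWord_pad, hp.reducedWord_iff]

theorem _root_.LMove.cuts_eq (h : LMove δ δ') : cuts δ' = cuts δ := by
  obtain ⟨p, hp⟩ := h.isLMoveAt_pad
  ext j
  rw [mem_cuts, mem_cuts, hp.isCut_iff]

theorem _root_.LMove.stars_eq (h : LMove δ δ') : stars δ' = stars δ := by
  obtain ⟨j, hj, h1, h2, h3, h4, hoff⟩ := h
  have hset : univ.filter (δ' · = .star) =
      insert ⟨j + 1, hj⟩ ((univ.filter (δ · = .star)).erase ⟨j, by omega⟩) := by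
    ext ⟨k, hkm⟩
    by_cases hk : k = j
    · subst hk
      simp [h3]
    by_cases hk' : k = j + 1
    · subst hk'
      simp [h4]
    · simp [hk, hk', hoff ⟨k, hkm⟩ hk hk']
  rw [stars, stars, hset, card_insert_of_notMem (by simp [h2]),
    card_erase_of_mem (by simp [h1])]
  have : 0 < (univ.filter (δ · = .star)).card := card_pos.2 ⟨⟨j, by omega⟩, by simp [h1]⟩
  omega

theorem _root_.LMove.card_ones (h : LMove δ δ') :
    (univ.filter (δ' · = .one)).card = (univ.filter (δ · = .one)).card + 1 := by
  obtain ⟨j, hj, h1, h2, h3, h4, hoff⟩ := h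
  have hset : univ.filter (δ' · = .one) = insert ⟨j, by omega⟩ (univ.filter (δ · = .one)) := by
    ext ⟨k, hkm⟩
    by_cases hk : k = j
    · subst hk
      simp [h3]
    by_cases hk' : k = j + 1
    · subst hk'
      simp [h4, h2]
    · simp [hk, hoff ⟨k, hkm⟩ hk hk']
  rw [hset, card_insert_of_notMem (by simp [h1])]

theorem _root_.LEquiv.eq_of_invariant {α : Type*} {f : (Fin m → PD) → α}
    (hf : ∀ δ δ', LMove δ δ' → f δ' = f δ) (h : LEquiv δ δ') : f δ = f δ' :=
  (Setoid.ker f).iseqv.eqvGen_iff.1 (Relation.EqvGen.mono (fun a b hab => (hf a b hab).symm) δ δ' h)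

end LMoves

section NormalForm

def windowStarts (V : Finset ℕ) : Finset ℕ := V.filter (· < V.sup id)

/-- For `V = {v₀ < ⋯ < v_r}` this is `0^{v₀} * 0^{v₁-v₀-1} ⋯ * 0^{v_r-v_{r-1}-1} 1^{m-v_r}`. -/
def canon (V : Finset ℕ) : Fin m → PD := fun k =>
  if (k : ℕ) < V.sup id then (if (k : ℕ) ∈ V then .star else .zero) else .one

variable {V : Finset ℕ}

theorem sup_le_of_subset_range (hV : V ⊆ range (m + 1)) : V.sup id ≤ m :=
  Finset.sup_le fun _ hx => Nat.lt_succ_iff.1 (mem_range.1 (hV hx))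

theorem canon_eq_star_iff (k : Fin m) : canon V k = .star ↔ (k : ℕ) ∈ windowStarts V := by
  unfold canon windowStarts
  split_ifs <;> simp_all

theorem pad_canon_succ (hV : V ⊆ range (m + 1)) (p : ℕ) :
    pad (canon (m := m) V) (p + 1) =
      if p < V.sup id then (if p ∈ V then .star else .zero) else .one := by
  by_cases hp : p < m
  · rw [pad_succ _ hp]
    rfl
  · rw [pad_of_lt _ (by omega), if_neg (by have := sup_le_of_subset_range hV; omega)]

theorem canon_reduced (hV : V ⊆ range (m + 1)) : Reduced (canon (m := m) V) := by
  rw [reduced_iff_reducedWord_pad]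
  rintro (_ | p) ⟨h1, h2⟩
  · cases h1
  · rw [pad_canon_succ hV] at h1 h2
    split_ifs at h1 h2
    omega

theorem cuts_canon (hV : V ⊆ range (m + 1)) (hne : V.Nonempty) : cuts (canon (m := m) V) = V := by
  have hleft : ∀ j, pad (canon (m := m) V) j ≠ .one ↔ j ≤ V.sup id := by
    rintro (_ | j)
    · simp
    · rw [pad_canon_succ hV]
      split_ifs <;> simp only [ne_eq, reduceCtorEq, not_false_eq_true, not_true_eq_false,
        true_iff, false_iff] <;> omega
  have hright : ∀ j, pad (canon (m := m) V) (j + 1) ≠ .zero ↔ (j < V.sup id → j ∈ V) := by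
    intro j
    rw [pad_canon_succ hV]
    split_ifs <;> simp_all
  ext j
  rw [mem_cuts, IsCut, hleft, hright]
  constructor
  · rintro ⟨h1, h2⟩
    rcases h1.lt_or_eq with h | h
    · exact h2 h
    · obtain ⟨s, hs, hsup⟩ := V.exists_mem_eq_sup hne id
      rwa [h, hsup]
  · exact fun hj => ⟨le_sup (f := id) hj, fun _ => hj⟩

theorem eq_canon_cuts {δ : Fin m → PD} (hred : Reduced δ)
    (hno : ∀ p, pad δ p = .one → pad δ (p + 1) ≠ .star) : δ = canon (cuts δ) := by
  rw [reduced_iff_reducedWord_pad] at hred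
  have hone : ∀ p q, p ≤ q → pad δ p = .one → pad δ q = .one := by
    intro p q hpq hp
    induction q, hpq using Nat.le_induction with
    | base => exact hp
    | succ q _ ih =>
      cases hq : pad δ (q + 1)
      · exact absurd ⟨ih, hq⟩ (hred q)
      · rfl
      · exact absurd hq (hno q ih)
  have hlt : ∀ k : Fin m, (k : ℕ) < (cuts δ).sup id ↔ δ k ≠ .one := by
    intro k
    rw [Finset.lt_sup_iff]
    constructor
    · rintro ⟨j, hj, hkj⟩ hk
      exact (mem_cuts.1 hj).1 (hone (k + 1) j hkj (by rw [pad_val_succ]; exact hk))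
    · intro hk
      obtain ⟨j, hkj, -, hj⟩ := exists_isCut_of_lt (w := pad δ) (Nat.succ_lt_succ k.isLt)
        (by rwa [pad_val_succ]) (by simp [pad_of_lt δ (Nat.lt_succ_self m)])
      exact ⟨j, mem_cuts.2 hj, hkj⟩
  have hmem : ∀ k : Fin m, (k : ℕ) ∈ cuts δ ↔ δ k ≠ .zero ∧ pad δ k ≠ .one := by
    intro k
    rw [mem_cuts, IsCut, pad_val_succ, and_comm]
  funext k
  unfold canon
  rw [if_congr (hlt k) (if_congr (hmem k) rfl rfl) rfl]
  cases hk : δ k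
  · simp
  · simp
  · simp only [ne_eq, reduceCtorEq, not_false_eq_true, true_and, if_true]
    rw [if_pos]
    intro h1
    exact hno k h1 (by rw [pad_val_succ]; exact hk)

/-- Undoing an L-move at a pair `1 *` removes a `1`, and without such pairs `δ` is in normal
form. -/
theorem lEquiv_canon_cuts {δ : Fin m → PD} (hred : Reduced δ) : LEquiv δ (canon (cuts δ)) := by
  induction hn : (univ.filter (δ · = .one)).card using Nat.strong_induction_on
    generalizing δ with
  | _ n ih =>
    by_cases hpair : ∃ k, ∃ hk : k + 1 < m, δ ⟨k, by omega⟩ = .one ∧ δ ⟨k + 1, hk⟩ = .star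
    · obtain ⟨k, hk, h1, h2⟩ := hpair
      set δ'' := Function.update (Function.update δ ⟨k, by omega⟩ .star) ⟨k + 1, hk⟩ .zero
      have hmove : LMove δ'' δ := by
        refine ⟨k, hk, by simp [δ''], by simp [δ''], h1, h2, fun i hi hi' => ?_⟩
        simp [δ'', Fin.ext_iff, hi, hi']
      have h'' := ih _ (by rw [← hn, hmove.card_ones]; omega) ((hmove.reduced_iff).1 hred) rfl
      rw [← hmove.cuts_eq] at h''
      exact (Relation.EqvGen.rel _ _ hmove).symm.trans _ _ _ h''
    · rw [← eq_canon_cuts hred]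
      · exact Relation.EqvGen.refl δ
      rintro (_ | p) h1 h2
      · cases h1
      · have hp' : p + 1 < m := by
          by_contra hp'
          rw [pad_of_lt δ (by omega)] at h2
          cases h2
        rw [pad_succ δ (by omega)] at h1
        rw [pad_succ δ hp'] at h2
        exact hpair ⟨p, hp', h1, h2⟩

end NormalForm

section Classes

def lClass (V : Finset ℕ) : Set (Fin m → PD) := {δ | Reduced δ ∧ cuts δ = V}

theorem setOf_lEquiv_eq_lClass {δ₀ : Fin m → PD} (h₀ : Reduced δ₀) :
    {δ | LEquiv δ₀ δ} = lClass (cuts δ₀) := by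
  ext δ
  constructor
  · intro h
    refine ⟨?_, (h.eq_of_invariant fun _ _ hmove => hmove.cuts_eq).symm⟩
    rwa [← h.eq_of_invariant (f := Reduced) fun _ _ hmove => propext hmove.reduced_iff]
  · rintro ⟨hred, hcut⟩
    have h := lEquiv_canon_cuts hred
    rw [hcut] at h
    exact (lEquiv_canon_cuts h₀).trans _ _ _ h.symm

theorem isLClass_iff {A : Set (Fin m → PD)} :
    IsLClass A ↔ ∃ V : Finset ℕ, V.Nonempty ∧ V ⊆ range (m + 1) ∧ A = lClass V := by
  constructor
  · rintro ⟨δ₀, h₀, rfl⟩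
    exact ⟨cuts δ₀, cuts_nonempty δ₀, cuts_subset_range δ₀, setOf_lEquiv_eq_lClass h₀⟩
  · rintro ⟨V, hne, hV, rfl⟩
    refine ⟨canon V, canon_reduced hV, ?_⟩
    rw [setOf_lEquiv_eq_lClass (canon_reduced hV), cuts_canon hV hne]

theorem stars_canon {V : Finset ℕ} (hV : V ⊆ range (m + 1)) :
    stars (canon (m := m) V) = (windowStarts V).card := by
  rw [stars, ← card_map Fin.valEmbedding]
  congr 1
  ext x
  simp only [mem_map, mem_filter, mem_univ, true_and, canon_eq_star_iff, Fin.valEmbedding_apply]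
  constructor
  · rintro ⟨k, hk, rfl⟩
    exact hk
  · intro hx
    have := sup_le_of_subset_range hV
    exact ⟨⟨x, by have := (mem_filter.1 hx).2; omega⟩, hx, rfl⟩

theorem stars_eq_card_windowStarts {δ : Fin m → PD} {V : Finset ℕ} (hδ : δ ∈ lClass V) :
    stars δ = (windowStarts V).card := by
  obtain ⟨hred, rfl⟩ := hδ
  rw [(lEquiv_canon_cuts hred).eq_of_invariant (f := stars) fun _ _ hmove => hmove.stars_eq,
    stars_canon (cuts_subset_range δ)]

def vertex (j : ℕ) : Fin m → PD := fun k => if (k : ℕ) < j then .zero else .one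

theorem canon_singleton (j : ℕ) : canon {j} = vertex (m := m) j := by
  funext k
  simp only [canon, vertex, sup_singleton, id_eq, mem_singleton]
  split_ifs <;> first | rfl | omega

theorem cuts_vertex {j : ℕ} (hj : j ≤ m) : cuts (vertex (m := m) j) = {j} := by
  rw [← canon_singleton, cuts_canon (by simpa using hj) (singleton_nonempty j)]

theorem stars_eq_zero_iff {δ : Fin m → PD} : stars δ = 0 ↔ ∀ k, δ k ≠ .star := by
  simp [stars, filter_eq_empty_iff]

theorem rv_iff {δ : Fin m → PD} : RV δ ↔ ∃ j ≤ m, δ = vertex j := by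
  constructor
  · rintro ⟨hred, hs⟩
    rw [stars_eq_zero_iff] at hs
    have hpad : ∀ p, pad δ (p + 1) ≠ .star := fun p => by
      by_cases hp : p < m
      · rw [pad_succ δ hp]
        exact hs _
      · rw [pad_of_lt δ (by omega)]
        simp
    have hδ := congrFun (eq_canon_cuts hred fun p _ => hpad p)
    refine ⟨(cuts δ).sup id, sup_le_of_subset_range (cuts_subset_range δ), funext fun k => ?_⟩
    rw [hδ k]
    unfold canon vertex
    split_ifs with h1 h2
    · exact absurd ((hδ k).trans ((canon_eq_star_iff k).2 (mem_filter.2 ⟨h2, h1⟩))) (hs k)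
    all_goals rfl
  · rintro ⟨j, hj, rfl⟩
    rw [← canon_singleton]
    refine ⟨canon_reduced (by simpa using hj), stars_eq_zero_iff.2 fun k hk => ?_⟩
    simp [canon_eq_star_iff, windowStarts] at hk
    omega

end Classes

section Coarsen

/-- When `cuts τ ⊆ V`, a reduced word with cut set `V` that `τ` refines: between consecutive
elements of `V` it puts its star at the first letter of `τ` that is not `1`. -/
def coarsen (V : Finset ℕ) (τ : Fin m → PD) : Fin m → PD := fun k =>
  if (k : ℕ) ∈ V ∨ pad τ k = .one then
    (if τ k = .one ∧ (k : ℕ) + 1 ∉ V then .one else .star)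
  else .zero

variable {V : Finset ℕ} {τ : Fin m → PD}

theorem coarsen_reduced (V : Finset ℕ) (τ : Fin m → PD) : Reduced (coarsen V τ) := by
  rintro k hk ⟨h1, h2⟩
  simp only [coarsen] at h1 h2
  split_ifs at h1 h2
  simp_all [pad_succ τ (show k < m by omega)]

theorem coarsen_refines (hτ : cuts τ ⊆ V) : Refines τ (coarsen V τ) := by
  intro k hk
  unfold coarsen at hk ⊢
  split_ifs at hk ⊢ with h1 h2
  · exact h2.1
  · simp at hk
  · by_contra h0
    exact h1 (Or.inl (hτ (mem_cuts.2 ⟨fun h => h1 (Or.inr h), by rwa [pad_val_succ]⟩)))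

theorem isCut_coarsen_of_mem (hV : V ⊆ range (m + 1)) {j : ℕ} (hjV : j ∈ V) :
    IsCut (pad (coarsen V τ)) j := by
  have hjm := mem_range.1 (hV hjV)
  constructor
  · rcases j with _ | k
    · simp
    · rw [pad_succ _ (by omega)]
      simp only [coarsen, hjV, not_true_eq_false, and_false, if_false]
      split_ifs <;> simp
  · by_cases hj : j < m
    · rw [pad_succ _ hj]
      simp only [coarsen, hjV, true_or, if_true]
      split_ifs <;> simp
    · rw [pad_of_lt _ (by omega)]
      simp

theorem mem_of_isCut_coarsen (hτ : cuts τ ⊆ V) {j : ℕ} (hjm : j ≤ m)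
    (hj : IsCut (pad (coarsen V τ)) j) : j ∈ V := by
  obtain ⟨hj1, hj2⟩ := hj
  by_contra hjV
  -- `j` is not a cut of `τ` either, and `coarsen V τ` copies the letter of `τ` that shows it
  by_cases hτ1 : pad τ j = .one
  · obtain ⟨k, rfl⟩ : ∃ k, j = k + 1 := ⟨j - 1, by rcases j with _ | j <;> simp_all⟩
    have hk : k < m := by omega
    have hkV : k ∈ V ∨ pad τ k = .one := by
      by_contra hcon
      rw [not_or] at hcon
      exact hcon.1 (hτ (mem_cuts.2 ⟨hcon.2, by simp [hτ1]⟩))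
    rw [pad_succ τ hk] at hτ1
    refine hj1 ?_
    rw [pad_succ _ hk]
    simp [coarsen, hkV, hτ1, hjV]
  · have h0 : pad τ (j + 1) = .zero := by
      by_contra h0
      exact hjV (hτ (mem_cuts.2 ⟨hτ1, h0⟩))
    have hj' : j < m := by
      by_contra hj'
      rw [pad_of_lt τ (by omega)] at h0
      cases h0
    rw [pad_succ τ hj'] at h0
    refine hj2 ?_
    rw [pad_succ _ hj']
    simp [coarsen, hjV, hτ1]

theorem cuts_coarsen (hτ : cuts τ ⊆ V) (hV : V ⊆ range (m + 1)) : cuts (coarsen V τ) = V := by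
  ext j
  refine ⟨fun hj => ?_, fun hj => mem_cuts.2 (isCut_coarsen_of_mem hV hj)⟩
  exact mem_of_isCut_coarsen hτ (Nat.lt_succ_iff.1 (mem_range.1 (cuts_subset_range _ hj)))
    (mem_cuts.1 hj)

end Coarsen

section Regions

noncomputable def pattern (a b y : Fin m → ℝ) : Fin m → PD := fun k =>
  if y k = a k then .zero else if y k = b k then .one else .star

def cutRegion (a b : Fin m → ℝ) (V : Finset ℕ) : Set (Fin m → ℝ) :=
  {y | y ∈ Set.Icc a b ∧ cuts (pattern a b y) ⊆ V}

variable {a b y : Fin m → ℝ} {V : Finset ℕ} {μ ν : Fin m → ℤ}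

theorem pattern_eq_zero_iff {k : Fin m} : pattern a b y k = .zero ↔ y k = a k := by
  unfold pattern
  split_ifs <;> simp_all

theorem pattern_eq_one_iff {k : Fin m} : pattern a b y k = .one ↔ y k ≠ a k ∧ y k = b k := by
  unfold pattern
  split_ifs <;> simp_all

theorem mem_face_iff (h : ∀ k, μ k < ν k) {δ : Fin m → PD} :
    y ∈ Face μ ν δ ↔ y ∈ Set.Icc (fun k => (μ k : ℝ)) (fun k => (ν k : ℝ)) ∧
      Refines (pattern (fun k => (μ k : ℝ)) (fun k => (ν k : ℝ)) y) δ := by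
  have hne : ∀ k, (μ k : ℝ) ≠ ν k := fun k => by exact_mod_cast (h k).ne
  constructor
  · intro hy
    refine ⟨⟨fun k => (hy k).1.1, fun k => (hy k).1.2⟩, fun k hk => ?_⟩
    cases hδ : δ k
    · exact pattern_eq_zero_iff.2 ((hy k).2.1 hδ)
    · have hyk := (hy k).2.2 hδ
      exact pattern_eq_one_iff.2 ⟨hyk ▸ (hne k).symm, hyk⟩
    · exact absurd hδ hk
  · rintro ⟨⟨hlo, hhi⟩, hr⟩ k
    refine ⟨⟨hlo k, hhi k⟩, fun hδ => ?_, fun hδ => ?_⟩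
    · exact pattern_eq_zero_iff.1 ((hr k (by simp [hδ])).trans hδ)
    · exact (pattern_eq_one_iff.1 ((hr k (by simp [hδ])).trans hδ)).2

theorem UF_lClass (h : ∀ k, μ k < ν k) (hV : V ⊆ range (m + 1)) :
    UF μ ν (lClass V) = cutRegion (fun k => (μ k : ℝ)) (fun k => (ν k : ℝ)) V := by
  ext y
  simp only [UF, Set.mem_iUnion, exists_prop]
  constructor
  · rintro ⟨δ, ⟨-, rfl⟩, hy⟩
    obtain ⟨hbox, hr⟩ := (mem_face_iff h).1 hy
    exact ⟨hbox, cuts_subset_of_refines hr⟩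
  · rintro ⟨hbox, hcut⟩
    exact ⟨_, ⟨coarsen_reduced _ _, cuts_coarsen hcut hV⟩,
      (mem_face_iff h).2 ⟨hbox, coarsen_refines hcut⟩⟩

theorem face_subset_cutRegion_iff (h : ∀ k, μ k < ν k) {δ : Fin m → PD}
    (hδ : ∀ k, δ k ≠ .star) :
    Face μ ν δ ⊆ cutRegion (fun k => (μ k : ℝ)) (fun k => (ν k : ℝ)) V ↔ cuts δ ⊆ V := by
  constructor
  · intro hsub
    set y : Fin m → ℝ := fun k => if δ k = .zero then (μ k : ℝ) else ν k
    have hy : y ∈ Face μ ν δ := fun k => by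
      have := (h k).le
      cases hk : δ k <;> simp [y, hk, this]
    have hpat : pattern (fun k => (μ k : ℝ)) (fun k => (ν k : ℝ)) y = δ :=
      funext fun k => ((mem_face_iff h).1 hy).2 k (hδ k)
    simpa [hpat] using (hsub hy).2
  · intro hcut y hy
    obtain ⟨hbox, hr⟩ := (mem_face_iff h).1 hy
    exact ⟨hbox, (cuts_subset_of_refines hr).trans hcut⟩

theorem vset_lClass (h : ∀ k, μ k < ν k) (hV : V ⊆ range (m + 1)) :
    vset μ ν (lClass V) = {δ | RV δ ∧ cuts δ ⊆ V} := by
  ext δ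
  simp only [vset, Set.mem_ofPred_eq, UF_lClass h hV]
  exact and_congr_right fun hrv => face_subset_cutRegion_iff h (stars_eq_zero_iff.1 hrv.2)

theorem cutRegion_inter (a b : Fin m → ℝ) (V W : Finset ℕ) :
    cutRegion a b V ∩ cutRegion a b W = cutRegion a b (V ∩ W) := by
  ext y
  simp only [cutRegion, Set.mem_inter_iff, Set.mem_ofPred_eq, subset_inter_iff]
  tauto

theorem cutRegion_empty (a b : Fin m → ℝ) : cutRegion a b ∅ = ∅ :=
  Set.eq_empty_of_forall_notMem fun y hy =>
    (cuts_nonempty (pattern a b y)).ne_empty (subset_empty.1 hy.2)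

theorem eq_left_of_forall_lt (hy : y ∈ cutRegion a b V) {k : Fin m} (hk : ∀ x ∈ V, (k : ℕ) < x) :
    y k = a k := by
  by_contra h
  obtain ⟨x, hx, -, hxk⟩ := exists_mem_of_cuts_subset hy.2 (Nat.succ_pos k) (by simp)
    (by rw [pad_val_succ]; exact mt pattern_eq_zero_iff.1 h)
  exact absurd (hk x hx) (by omega)

theorem eq_right_of_sup_le (hy : y ∈ cutRegion a b V) {k : Fin m} (hk : V.sup id ≤ k) :
    y k = b k := by
  by_contra h
  obtain ⟨x, hx, hkx, -⟩ := exists_mem_of_cuts_subset hy.2 (Nat.succ_lt_succ k.isLt)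
    (by rw [pad_val_succ]; exact fun h' => h (pattern_eq_one_iff.1 h').2)
    (by simp [pad_of_lt _ (Nat.lt_succ_self m)])
  have := le_sup (f := id) hx
  simp only [id] at this
  omega

theorem eq_left_of_ne_right (hy : y ∈ cutRegion a b V) {k k' : Fin m} (hkk' : (k : ℕ) < k')
    (hV : ∀ x ∈ V, x ≤ k ∨ k' < x) (hk : y k ≠ b k) : y k' = a k' := by
  by_contra h
  obtain ⟨x, hx, h1, h2⟩ := exists_mem_of_cuts_subset hy.2 (Nat.succ_lt_succ hkk')
    (by rw [pad_val_succ]; exact fun h' => hk (pattern_eq_one_iff.1 h').2)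
    (by rw [pad_val_succ]; exact mt pattern_eq_zero_iff.1 h)
  rcases hV x hx with h' | h' <;> omega

end Regions

section VertexIndices

open Classical in
noncomputable def vertexIndices (S : Set (Fin m → PD)) : Finset ℕ :=
  (range (m + 1)).filter (fun j => vertex j ∈ S)

variable {μ ν : Fin m → ℤ} {S T : Set (Fin m → PD)} {V : Finset ℕ}

theorem mem_vertexIndices {j : ℕ} : j ∈ vertexIndices S ↔ j ≤ m ∧ vertex j ∈ S := by
  simp [vertexIndices]

theorem vertexIndices_subset_range : vertexIndices S ⊆ range (m + 1) :=
  fun _ hj => mem_range.2 (Nat.lt_succ_of_le (mem_vertexIndices.1 hj).1)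

theorem vertexIndices_vset (h : ∀ k, μ k < ν k) (hV : V ⊆ range (m + 1)) :
    vertexIndices (vset μ ν (lClass V)) = V := by
  ext j
  simp only [mem_vertexIndices, vset_lClass h hV, Set.mem_ofPred_eq]
  constructor
  · rintro ⟨hj, -, hsub⟩
    rwa [cuts_vertex hj, singleton_subset_iff] at hsub
  · intro hj
    have hjm := Nat.lt_succ_iff.1 (mem_range.1 (hV hj))
    exact ⟨hjm, rv_iff.2 ⟨j, hjm, rfl⟩, by rwa [cuts_vertex hjm, singleton_subset_iff]⟩

theorem vset_lClass_vertexIndices (h : ∀ k, μ k < ν k) (hS : S ⊆ {δ | RV δ}) :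
    vset μ ν (lClass (vertexIndices S)) = S := by
  ext δ
  rw [vset_lClass h vertexIndices_subset_range]
  constructor
  · rintro ⟨hrv, hsub⟩
    obtain ⟨j, hj, rfl⟩ := rv_iff.1 hrv
    rw [cuts_vertex hj, singleton_subset_iff] at hsub
    exact (mem_vertexIndices.1 hsub).2
  · intro hδ
    obtain ⟨j, hj, rfl⟩ := rv_iff.1 (hS hδ)
    refine ⟨hS hδ, ?_⟩
    rw [cuts_vertex hj, singleton_subset_iff]
    exact mem_vertexIndices.2 ⟨hj, hδ⟩

theorem vertexIndices_nonempty (hS : S ⊆ {δ | RV δ}) (hne : S.Nonempty) :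
    (vertexIndices S).Nonempty := by
  obtain ⟨δ, hδ⟩ := hne
  obtain ⟨j, hj, rfl⟩ := rv_iff.1 (hS hδ)
  exact ⟨j, mem_vertexIndices.2 ⟨hj, hδ⟩⟩

theorem vertexIndices_inter : vertexIndices (S ∩ T) = vertexIndices S ∩ vertexIndices T := by
  ext j
  simp only [mem_vertexIndices, mem_inter, Set.mem_inter_iff]
  tauto

theorem vertexIndices_empty : vertexIndices (∅ : Set (Fin m → PD)) = ∅ := by
  ext j
  simp [mem_vertexIndices]

end VertexIndices

section Clamp

noncomputable def clamp (x : ℝ) : ℝ := Set.projIcc 0 1 zero_le_one x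

variable {x : ℝ}

theorem clamp_of_nonpos (h : x ≤ 0) : clamp x = 0 := by
  simp [clamp, Set.projIcc_of_le_left _ h]

theorem clamp_of_one_le (h : 1 ≤ x) : clamp x = 1 := by
  simp [clamp, Set.projIcc_of_right_le _ h]

theorem clamp_of_mem (h : x ∈ Set.Icc 0 1) : clamp x = x := by
  simp [clamp, Set.projIcc_of_mem _ h]

theorem clamp_mem (x : ℝ) : clamp x ∈ Set.Icc 0 1 := Subtype.mem _

theorem continuous_clamp : Continuous clamp := continuous_subtype_val.comp continuous_projIcc

theorem clamp_eq_one_or_clamp_sub_one_eq_zero (x : ℝ) : clamp x = 1 ∨ clamp (x - 1) = 0 := by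
  rcases le_or_gt 1 x with h | h
  · exact Or.inl (clamp_of_one_le h)
  · exact Or.inr (clamp_of_nonpos (by linarith))

theorem sum_range_clamp_sub {L : ℕ} {u : ℝ} (h0 : 0 ≤ u) (hL : u ≤ L) :
    ∑ i ∈ range L, clamp (u - i) = u := by
  induction L with
  | zero =>
    simp only [CharP.cast_eq_zero] at hL
    simp [le_antisymm hL h0]
  | succ L ih =>
    rw [sum_range_succ]
    rcases le_or_gt u L with hu | hu
    · rw [ih hu, clamp_of_nonpos (by linarith), add_zero]
    · have hone : ∀ i ∈ range L, clamp (u - i) = 1 := fun i hi => by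
        have : (i : ℝ) + 1 ≤ L := by exact_mod_cast mem_range.1 hi
        exact clamp_of_one_le (by linarith)
      push_cast at hL
      rw [sum_congr rfl hone, sum_const, card_range, nsmul_one,
        clamp_of_mem ⟨by linarith, by linarith⟩]
      ring

theorem clamp_sum_range_sub {L : ℕ} {f : ℕ → ℝ} (hf : ∀ i < L, f i ∈ Set.Icc 0 1)
    (hst : ∀ i i', i < i' → i' < L → f i ≠ 1 → f i' = 0) {i : ℕ} (hi : i < L) :
    clamp ((∑ t ∈ range L, f t) - i) = f i := by
  have hsplit : ∑ t ∈ range L, f t = ∑ t ∈ range i, f t + f i + ∑ t ∈ Ico (i + 1) L, f t := by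
    rw [← sum_range_succ, sum_range_add_sum_Ico _ (by omega)]
  have hA : ∑ t ∈ range i, f t ≤ i :=
    (sum_le_sum fun t ht => (hf t (by simp at ht; omega)).2).trans (by simp)
  have hB : 0 ≤ ∑ t ∈ Ico (i + 1) L, f t :=
    sum_nonneg fun t ht => (hf t (by simp at ht; omega)).1
  have hA' : f i ≠ 0 → ∑ t ∈ range i, f t = i := fun h0 => by
    have hone : ∀ t ∈ range i, f t = 1 := fun t ht => by
      by_contra h1
      exact h0 (hst t i (mem_range.1 ht) hi h1)
    simp [sum_congr rfl hone]
  have hB' : f i ≠ 1 → ∑ t ∈ Ico (i + 1) L, f t = 0 := fun h1 =>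
    sum_eq_zero fun t ht => hst i t (by simp at ht; omega) (by simp at ht; omega) h1
  rw [hsplit]
  by_cases h1 : f i = 1
  · rw [hA' (by rw [h1]; norm_num), h1]
    exact clamp_of_one_le (by linarith)
  by_cases h0 : f i = 0
  · rw [hB' h1, h0]
    exact clamp_of_nonpos (by linarith)
  · rw [hA' h0, hB' h1, add_zero, add_sub_cancel_left]
    exact clamp_of_mem (hf i hi)

end Clamp

section Windows

variable (V : Finset ℕ)

def lastCut (p : ℕ) : ℕ := Nat.findGreatest (· ∈ V) p

def nextCut (p : ℕ) : ℕ :=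
  Nat.find (⟨p + V.sup id + 1, by omega, Or.inr (by omega)⟩ :
    ∃ x, p < x ∧ (x ∈ V ∨ V.sup id < x))

def windowLength (i : ℕ) : ℕ := nextCut V i - i

variable {V} {p x : ℕ}

theorem lastCut_le (p : ℕ) : lastCut V p ≤ p := Nat.findGreatest_le p

theorem le_lastCut (hx : x ∈ V) (hxp : x ≤ p) : x ≤ lastCut V p := Nat.le_findGreatest hxp hx

theorem lastCut_mem (hx : x ∈ V) (hxp : x ≤ p) : lastCut V p ∈ V := Nat.findGreatest_spec hxp hx

theorem nextCut_spec (p : ℕ) : p < nextCut V p ∧ (nextCut V p ∈ V ∨ V.sup id < nextCut V p) := by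
  unfold nextCut
  exact Nat.find_spec (p := fun x => p < x ∧ (x ∈ V ∨ V.sup id < x)) _

theorem lt_nextCut (p : ℕ) : p < nextCut V p := (nextCut_spec p).1

theorem nextCut_le (hx : x ∈ V) (hpx : p < x) : nextCut V p ≤ x := Nat.find_min' _ ⟨hpx, Or.inl hx⟩

theorem nextCut_mem (hp : p < V.sup id) : nextCut V p ∈ V := by
  obtain ⟨x, hx, hpx⟩ := Finset.lt_sup_iff.1 hp
  refine (nextCut_spec p).2.resolve_right fun h => ?_
  have := nextCut_le hx hpx
  have := le_sup (f := id) hx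
  simp only [id] at *
  omega

theorem windowLength_pos (i : ℕ) : 0 < windowLength V i := Nat.sub_pos_of_lt (lt_nextCut i)

theorem lastCut_eq {i k : ℕ} (hi : i ∈ V) (hik : i ≤ k) (hk : k < nextCut V i) :
    lastCut V k = i := by
  refine le_antisymm ?_ (le_lastCut hi hik)
  by_contra h
  have := nextCut_le (lastCut_mem hi hik) (not_le.1 h)
  have := lastCut_le (V := V) k
  omega

theorem lt_nextCut_lastCut {k : ℕ} (hk : k < V.sup id) : k < nextCut V (lastCut V k) := by
  by_contra h
  have := le_lastCut (nextCut_mem ((lastCut_le k).trans_lt hk)) (not_lt.1 h)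
  have := lt_nextCut (V := V) (lastCut V k)
  omega

theorem mem_windowStarts {i : ℕ} : i ∈ windowStarts V ↔ i ∈ V ∧ i < V.sup id := mem_filter

theorem lastCut_mem_windowStarts {k : ℕ} (hx : x ∈ V) (hxk : x ≤ k) (hk : k < V.sup id) :
    lastCut V k ∈ windowStarts V :=
  mem_windowStarts.2 ⟨lastCut_mem hx hxk, (lastCut_le k).trans_lt hk⟩

theorem nextCut_le_of_mem_windowStarts (hV : V ⊆ range (m + 1)) {i : ℕ}
    (hi : i ∈ windowStarts V) : nextCut V i ≤ m :=
  Nat.lt_succ_iff.1 (mem_range.1 (hV (nextCut_mem (mem_windowStarts.1 hi).2)))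

end Windows

section Parametrization

variable (V : Finset ℕ)

noncomputable def toSeq (t : Fin m → ℝ) (p : ℕ) : ℝ := if h : p < m then t ⟨p, h⟩ else 0

noncomputable def windowAverage (t : Fin m → ℝ) (i : ℕ) : ℝ :=
  (∑ r ∈ range (windowLength V i), toSeq t (i + r)) / windowLength V i

/-- The point of the unit cube whose staircase on the window starting at `i` has average `c i`. -/
noncomputable def fill (c : ℕ → ℝ) (k : Fin m) : ℝ :=
  if ∀ x ∈ V, (k : ℕ) < x then 0
  else if V.sup id ≤ k then 1
  else clamp (c (lastCut V k) * windowLength V (lastCut V k) - ((k : ℕ) - lastCut V k : ℕ))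

variable {V} {i : ℕ} {c : ℕ → ℝ}

theorem fill_of_mem_window (hi : i ∈ windowStarts V) {k : Fin m} (hik : i ≤ k)
    (hk : (k : ℕ) < nextCut V i) :
    fill V c k = clamp (c i * windowLength V i - ((k : ℕ) - i : ℕ)) := by
  obtain ⟨hiV, hisup⟩ := mem_windowStarts.1 hi
  have hksup : (k : ℕ) < V.sup id := by
    have := le_sup (f := id) (nextCut_mem hisup)
    simp only [id] at this
    omega
  rw [fill, if_neg fun h => absurd (h i hiV) (by omega), if_neg (by omega),
    lastCut_eq hiV hik hk]

theorem fill_mem_Icc (k : Fin m) : fill V c k ∈ Set.Icc 0 1 := by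
  unfold fill
  split_ifs
  · simp
  · simp
  · exact clamp_mem _

theorem fill_eq_one_or_fill_succ_eq_zero (hi : i ∈ windowStarts V) {k : ℕ} (hik : i ≤ k)
    (hk : k + 1 < nextCut V i) (hkm : k + 1 < m) :
    fill (m := m) V c ⟨k, by omega⟩ = 1 ∨ fill V c ⟨k + 1, hkm⟩ = 0 := by
  rw [fill_of_mem_window hi hik (show k < nextCut V i by omega),
    fill_of_mem_window hi (show i ≤ k + 1 by omega) hk,
    show k + 1 - i = (k - i) + 1 by omega, Nat.cast_succ, ← sub_sub]
  exact clamp_eq_one_or_clamp_sub_one_eq_zero _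

theorem fill_mem_cutRegion (hV : V ⊆ range (m + 1)) (hne : V.Nonempty) (c : ℕ → ℝ) :
    fill (m := m) V c ∈ cutRegion 0 1 V := by
  refine ⟨⟨fun k => (fill_mem_Icc k).1, fun k => (fill_mem_Icc k).2⟩, fun j hj => ?_⟩
  obtain ⟨h1, h2⟩ := mem_cuts.1 hj
  have hjm := Nat.lt_succ_iff.1 (mem_range.1 (cuts_subset_range _ hj))
  by_contra hjV
  have hzero : ∀ k : Fin m, fill V c k = 0 → pad (pattern 0 1 (fill V c)) (k + 1) = .zero :=
    fun k hk => by rw [pad_val_succ]; exact pattern_eq_zero_iff.2 hk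
  have hone : ∀ k : Fin m, fill V c k = 1 → pad (pattern 0 1 (fill V c)) (k + 1) = .one :=
    fun k hk => by rw [pad_val_succ]; exact pattern_eq_one_iff.2 ⟨by simp [hk], hk⟩
  obtain ⟨s, hs, hsup⟩ := V.exists_mem_eq_sup hne id
  simp only [id] at hsup
  have hsm := sup_le_of_subset_range hV
  by_cases hpre : ∀ x ∈ V, j < x
  · have hj : j < m := by have := hpre s hs; omega
    exact h2 (hzero ⟨j, hj⟩ (if_pos hpre))
  push Not at hpre
  obtain ⟨x, hx, hxj⟩ := hpre
  have hxj' : x < j := lt_of_le_of_ne hxj fun h => hjV (h ▸ hx)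
  obtain ⟨k, rfl⟩ : ∃ k, j = k + 1 := ⟨j - 1, by omega⟩
  have hk : k < m := by omega
  have hkpre : ¬∀ x ∈ V, k < x := fun h => absurd (h x hx) (by omega)
  by_cases hsuf : V.sup id ≤ k
  · exact h1 (hone ⟨k, hk⟩ ((if_neg hkpre).trans (if_pos hsuf)))
  have hk1 : k + 1 < V.sup id := lt_of_le_of_ne (by omega) fun h => hjV (by rwa [h, hsup])
  have hi := lastCut_mem_windowStarts hx (by omega) (not_le.1 hsuf)
  have hk1n : k + 1 < nextCut V (lastCut V k) :=
    lt_of_le_of_ne (lt_nextCut_lastCut (not_le.1 hsuf))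
      fun h => hjV (h ▸ nextCut_mem (mem_windowStarts.1 hi).2)
  rcases fill_eq_one_or_fill_succ_eq_zero (c := c) hi (lastCut_le k) hk1n (by omega) with h' | h'
  · exact h1 (hone ⟨k, hk⟩ h')
  · exact h2 (hzero ⟨k + 1, by omega⟩ h')

theorem windowAverage_fill (hV : V ⊆ range (m + 1)) (hi : i ∈ windowStarts V)
    (hc : c i ∈ Set.Icc 0 1) : windowAverage V (fill (m := m) V c) i = c i := by
  have hn := nextCut_le_of_mem_windowStarts hV hi
  have hterm : ∀ r ∈ range (windowLength V i),
      toSeq (fill (m := m) V c) (i + r) = clamp (c i * windowLength V i - r) := fun r hr => by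
    have hr' : i + r < nextCut V i := by simp only [windowLength, mem_range] at hr; omega
    rw [toSeq, dif_pos (by omega), fill_of_mem_window hi (by simp) hr', Nat.add_sub_cancel_left]
  have hL : (0 : ℝ) < windowLength V i := Nat.cast_pos.2 (windowLength_pos i)
  rw [windowAverage, sum_congr rfl hterm, sum_range_clamp_sub (mul_nonneg hc.1 hL.le)
    (mul_le_of_le_one_left hL.le hc.2), mul_div_assoc, div_self hL.ne', mul_one]

theorem fill_windowAverage (hV : V ⊆ range (m + 1)) {t : Fin m → ℝ}
    (ht : t ∈ cutRegion 0 1 V) : fill V (windowAverage V t) = t := by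
  funext k
  unfold fill
  split_ifs with hpre hsuf
  · exact (eq_left_of_forall_lt ht hpre).symm
  · exact (eq_right_of_sup_le ht hsuf).symm
  push Not at hpre
  obtain ⟨x, hx, hxk⟩ := hpre
  set i := lastCut V k
  have hik : i ≤ k := lastCut_le k
  have hkn : (k : ℕ) < nextCut V i := lt_nextCut_lastCut (not_le.1 hsuf)
  have hn : nextCut V i ≤ m :=
    nextCut_le_of_mem_windowStarts hV (lastCut_mem_windowStarts hx hxk (not_le.1 hsuf))
  have hwin : ∀ x ∈ V, x ≤ i ∨ nextCut V i ≤ x := fun x hx => by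
    by_contra h
    push Not at h
    exact absurd (nextCut_le hx h.1) (by omega)
  have hL : (0 : ℝ) < windowLength V i := Nat.cast_pos.2 (windowLength_pos i)
  rw [windowAverage, div_mul_cancel₀ _ hL.ne',
    clamp_sum_range_sub (f := fun r => toSeq t (i + r)) ?_ ?_ (by simp only [windowLength]; omega)]
  · simp [toSeq, Nat.add_sub_cancel' hik]
  · intro r hr
    simp only [windowLength] at hr
    rw [toSeq, dif_pos (by omega)]
    exact ⟨ht.1.1 _, ht.1.2 _⟩
  · intro r r' hrr' hr' h1
    simp only [windowLength] at hr'
    have hr : i + r < m := by omega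
    have hr'' : i + r' < m := by omega
    simp only [toSeq, dif_pos hr, dif_pos hr''] at h1 ⊢
    exact eq_left_of_ne_right ht (k := ⟨i + r, hr⟩) (k' := ⟨i + r', hr''⟩) (by simpa using hrr')
      (fun x hx => by rcases hwin x hx with h | h <;> simp <;> omega) h1

theorem windowAverage_mem (hV : V ⊆ range (m + 1)) {t : Fin m → ℝ} (ht : t ∈ cutRegion 0 1 V)
    (hi : i ∈ windowStarts V) : windowAverage V t i ∈ Set.Icc 0 1 := by
  have hn := nextCut_le_of_mem_windowStarts hV hi
  have hterm : ∀ r ∈ range (windowLength V i), toSeq t (i + r) ∈ Set.Icc 0 1 := fun r hr => by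
    simp only [windowLength, mem_range] at hr
    rw [toSeq, dif_pos (by omega)]
    exact ⟨ht.1.1 _, ht.1.2 _⟩
  have hL : (0 : ℝ) < windowLength V i := Nat.cast_pos.2 (windowLength_pos i)
  rw [windowAverage, Set.mem_Icc, div_le_one hL]
  refine ⟨div_nonneg (sum_nonneg fun r hr => (hterm r hr).1) hL.le, ?_⟩
  exact (sum_le_sum fun r hr => (hterm r hr).2).trans (by simp)

theorem fill_congr {c' : ℕ → ℝ} (hcc : ∀ i ∈ windowStarts V, c i = c' i) :
    fill (m := m) V c = fill V c' := by
  funext k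
  unfold fill
  split_ifs with hpre hsuf
  · rfl
  · rfl
  push Not at hpre
  obtain ⟨x, hx, hxk⟩ := hpre
  rw [hcc _ (lastCut_mem_windowStarts hx hxk (not_le.1 hsuf))]

theorem continuous_windowAverage (i : ℕ) :
    Continuous fun t : Fin m → ℝ => windowAverage V t i := by
  refine (continuous_finsetSum _ fun r _ => ?_).div_const _
  unfold toSeq
  split_ifs
  · exact continuous_apply _
  · exact continuous_const

theorem continuous_fill (k : Fin m) : Continuous fun c : ℕ → ℝ => fill V c k := by
  unfold fill
  split_ifs
  · exact continuous_const
  · exact continuous_const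
  · exact continuous_clamp.comp (((continuous_apply _).mul continuous_const).sub continuous_const)

noncomputable def extendByZero (c : windowStarts V → Set.Icc (0 : ℝ) 1) (i : ℕ) : ℝ :=
  if h : i ∈ windowStarts V then c ⟨i, h⟩ else 0

theorem extendByZero_of_mem (c : windowStarts V → Set.Icc (0 : ℝ) 1) (hi : i ∈ windowStarts V) :
    extendByZero c i = c ⟨i, hi⟩ := dif_pos hi

theorem continuous_extendByZero :
    Continuous (extendByZero : (windowStarts V → Set.Icc (0 : ℝ) 1) → ℕ → ℝ) :=
  continuous_pi fun i => by
    unfold extendByZero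
    split_ifs
    · exact continuous_subtype_val.comp (continuous_apply _)
    · exact continuous_const

noncomputable def windowCoords (hV : V ⊆ range (m + 1)) (t : cutRegion (0 : Fin m → ℝ) 1 V) :
    windowStarts V → Set.Icc (0 : ℝ) 1 :=
  fun i => ⟨windowAverage V t i, windowAverage_mem hV t.2 i.2⟩

theorem fill_extendByZero_windowCoords (hV : V ⊆ range (m + 1))
    (t : cutRegion (0 : Fin m → ℝ) 1 V) : fill (m := m) V (extendByZero (windowCoords hV t)) = t :=
  (fill_congr fun _ hi => extendByZero_of_mem _ hi).trans (fill_windowAverage hV t.2)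

theorem windowCoords_fill (hV : V ⊆ range (m + 1)) (hne : V.Nonempty)
    (c : windowStarts V → Set.Icc (0 : ℝ) 1) :
    windowCoords hV ⟨fill V (extendByZero c), fill_mem_cutRegion hV hne _⟩ = c :=
  funext fun i => Subtype.ext <|
    (windowAverage_fill hV i.2 (by rw [extendByZero_of_mem c i.2]; exact (c i).2)).trans
      (extendByZero_of_mem c i.2)

noncomputable def cutRegionHomeo (hV : V ⊆ range (m + 1)) (hne : V.Nonempty) :
    cutRegion (0 : Fin m → ℝ) 1 V ≃ₜ (windowStarts V → Set.Icc (0 : ℝ) 1) where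
  toFun := windowCoords hV
  invFun c := ⟨fill V (extendByZero c), fill_mem_cutRegion hV hne _⟩
  left_inv t := Subtype.ext (fill_extendByZero_windowCoords hV t)
  right_inv := windowCoords_fill hV hne
  continuous_toFun := continuous_pi fun i =>
    ((continuous_windowAverage i.1).comp continuous_subtype_val).subtype_mk _
  continuous_invFun :=
    (continuous_pi fun k => (continuous_fill k).comp continuous_extendByZero).subtype_mk _

end Parametrization

section Affine

variable {a b : Fin m → ℝ}

noncomputable def affineHomeo (a b : Fin m → ℝ) (hab : ∀ k, a k < b k) :
    (Fin m → ℝ) ≃ₜ (Fin m → ℝ) :=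
  Homeomorph.piCongrRight fun k =>
    (Homeomorph.mulLeft₀ (b k - a k) (sub_pos.2 (hab k)).ne').trans (Homeomorph.addLeft (a k))

theorem affineHomeo_apply (hab : ∀ k, a k < b k) (t : Fin m → ℝ) (k : Fin m) :
    affineHomeo a b hab t k = a k + (b k - a k) * t k := rfl

theorem image_affineHomeo_cutRegion (hab : ∀ k, a k < b k) (V : Finset ℕ) :
    affineHomeo a b hab '' cutRegion 0 1 V = cutRegion a b V := by
  suffices affineHomeo a b hab ⁻¹' cutRegion a b V = cutRegion 0 1 V by
    rw [← this, Set.image_preimage_eq _ (affineHomeo a b hab).surjective]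
  have hd : ∀ k, 0 < b k - a k := fun k => sub_pos.2 (hab k)
  ext t
  have hpat : pattern a b (affineHomeo a b hab t) = pattern 0 1 t := funext fun k => by
    have h0 : a k + (b k - a k) * t k = a k ↔ t k = 0 := by
      simp [(hd k).ne']
    have h1 : a k + (b k - a k) * t k = b k ↔ t k = 1 := by
      rw [← sub_eq_zero, show a k + (b k - a k) * t k - b k = (b k - a k) * (t k - 1) by ring]
      simp [(hd k).ne', sub_eq_zero]
    simp only [pattern, affineHomeo_apply, h0, h1, Pi.zero_apply, Pi.one_apply]
  have hbox : affineHomeo a b hab t ∈ Set.Icc a b ↔ t ∈ Set.Icc 0 1 := by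
    simp only [Set.mem_Icc, Pi.le_def, affineHomeo_apply, Pi.zero_apply, Pi.one_apply]
    refine and_congr (forall_congr' fun k => ?_) (forall_congr' fun k => ?_)
    · rw [le_add_iff_nonneg_right, mul_nonneg_iff_of_pos_left (hd k)]
    · rw [← sub_nonneg, show b k - (a k + (b k - a k) * t k) = (b k - a k) * (1 - t k) by ring,
        mul_nonneg_iff_of_pos_left (hd k), sub_nonneg]
  simp only [cutRegion, Set.mem_preimage, Set.mem_ofPred_eq, hpat, hbox]

end Affine

theorem nonempty_homeomorph_UF_lClass {μ ν : Fin m → ℤ} (h : ∀ k, μ k < ν k) {V : Finset ℕ}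
    (hV : V ⊆ range (m + 1)) (hne : V.Nonempty) {δ : Fin m → PD} (hδ : δ ∈ lClass V) :
    Nonempty (UF μ ν (lClass V) ≃ₜ (Fin (stars δ) → Set.Icc (0 : ℝ) 1)) := by
  have hab : ∀ k, (μ k : ℝ) < ν k := fun k => by exact_mod_cast h k
  have hUF : UF μ ν (lClass V) = affineHomeo _ _ hab '' cutRegion 0 1 V := by
    rw [UF_lClass h hV, image_affineHomeo_cutRegion]
  have e : Fin (stars δ) ≃ windowStarts V :=
    (Fintype.equivFinOfCardEq (by rw [Fintype.card_coe, stars_eq_card_windowStarts hδ])).symm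
  exact ⟨(Homeomorph.setCongr hUF).trans <| ((affineHomeo _ _ hab).image _).symm.trans <|
    (cutRegionHomeo hV hne).trans (Homeomorph.piCongrLeft e).symm⟩

end Paradiagram

open Paradiagram

theorem stmt_11_general (m : ℕ) (μ ν : Fin m → ℤ) (h : ∀ k, μ k < ν k) :
    -- the reduced vertices are exactly the m+1 words 0^j 1^{m-j}
    ({δ : Fin m → PD | RV δ} =
      {δ | ∃ j ≤ m, δ = fun k : Fin m => if k.val < j then PD.zero else PD.one}) ∧
    -- (i) A ↦ v(A) is a bijection onto nonempty subsets of the reduced vertices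
    (∀ A : Set (Fin m → PD), IsLClass A → (vset μ ν A).Nonempty ∧ vset μ ν A ⊆ {δ | RV δ}) ∧
    (∀ A B : Set (Fin m → PD), IsLClass A → IsLClass B → vset μ ν A = vset μ ν B → A = B) ∧
    (∀ V : Set (Fin m → PD), V ⊆ {δ | RV δ} → V.Nonempty →
      ∃ A : Set (Fin m → PD), IsLClass A ∧ vset μ ν A = V) ∧
    -- (ii) intersections correspond to intersections
    (∀ A B : Set (Fin m → PD), IsLClass A → IsLClass B →
      ((vset μ ν A ∩ vset μ ν B).Nonempty →
        ∀ C : Set (Fin m → PD), IsLClass C → vset μ ν C = vset μ ν A ∩ vset μ ν B →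
          UF μ ν A ∩ UF μ ν B = UF μ ν C) ∧
      (vset μ ν A ∩ vset μ ν B = ∅ → UF μ ν A ∩ UF μ ν B = ∅)) ∧
    -- (iii) U(A) is homeomorphic to the closed cube [0,1]^k
    (∀ A : Set (Fin m → PD), IsLClass A → ∀ δ ∈ A,
      Nonempty ((UF μ ν A) ≃ₜ (Fin (stars δ) → (Set.Icc (0:ℝ) 1)))) := by
  refine ⟨Set.ext fun δ => rv_iff, fun A hA => ?_, fun A B hA hB hAB => ?_,
    fun S hS hne => ?_, fun A B hA hB => ?_, fun A hA δ hδ => ?_⟩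
  · obtain ⟨V, ⟨j, hj⟩, hV, rfl⟩ := isLClass_iff.1 hA
    rw [← vertexIndices_vset h hV] at hj
    exact ⟨⟨vertex j, (mem_vertexIndices.1 hj).2⟩, fun δ hδ => hδ.1⟩
  · obtain ⟨V, -, hV, rfl⟩ := isLClass_iff.1 hA
    obtain ⟨W, -, hW, rfl⟩ := isLClass_iff.1 hB
    rw [← vertexIndices_vset h hV, hAB, vertexIndices_vset h hW]
  · exact ⟨lClass (vertexIndices S), isLClass_iff.2 ⟨_, vertexIndices_nonempty hS hne,
      vertexIndices_subset_range, rfl⟩, vset_lClass_vertexIndices h hS⟩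
  · obtain ⟨V, -, hV, rfl⟩ := isLClass_iff.1 hA
    obtain ⟨W, -, hW, rfl⟩ := isLClass_iff.1 hB
    have hindex : vertexIndices (vset μ ν (lClass V) ∩ vset μ ν (lClass W)) = V ∩ W := by
      rw [vertexIndices_inter, vertexIndices_vset h hV, vertexIndices_vset h hW]
    rw [UF_lClass h hV, UF_lClass h hW, cutRegion_inter]
    refine ⟨fun _ C hC hCAB => ?_, fun hempty => ?_⟩
    · obtain ⟨U, -, hU, rfl⟩ := isLClass_iff.1 hC
      rw [UF_lClass h hU, ← hindex, ← hCAB, vertexIndices_vset h hU]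
    · rw [← hindex, hempty, vertexIndices_empty, cutRegion_empty]
  · obtain ⟨V, hne, hV, rfl⟩ := isLClass_iff.1 hA
    exact nonempty_homeomorph_UF_lClass h hV hne hδ

/-- the reduced vertices are exactly the `m+1` words `0^j 1^{m−j}`; the map
`A ↦ v(A)` is a bijection from L-classes onto nonempty sets of reduced vertices; it takes
intersections to intersections (with `U(A) ∩ U(B) = ∅` when `v(A) ∩ v(B) = ∅`); and the union
`U(A)` of an L-class whose paradiagrams have `k` stars is homeomorphic to the cube `[0,1]^k`. -/
theorem stmt_11 (m : ℕ) (hm : 1 ≤ m) (μ ν : Fin m → ℤ) (h : ∀ k, μ k < ν k) :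
    -- the reduced vertices are exactly the m+1 words 0^j 1^{m-j}
    ({δ : Fin m → PD | RV δ} =
      {δ | ∃ j ≤ m, δ = fun k : Fin m => if k.val < j then PD.zero else PD.one}) ∧
    -- (i) A ↦ v(A) is a bijection onto nonempty subsets of the reduced vertices
    (∀ A : Set (Fin m → PD), IsLClass A → (vset μ ν A).Nonempty ∧ vset μ ν A ⊆ {δ | RV δ}) ∧
    (∀ A B : Set (Fin m → PD), IsLClass A → IsLClass B → vset μ ν A = vset μ ν B → A = B) ∧
    (∀ V : Set (Fin m → PD), V ⊆ {δ | RV δ} → V.Nonempty →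
      ∃ A : Set (Fin m → PD), IsLClass A ∧ vset μ ν A = V) ∧
    -- (ii) intersections correspond to intersections
    (∀ A B : Set (Fin m → PD), IsLClass A → IsLClass B →
      ((vset μ ν A ∩ vset μ ν B).Nonempty →
        ∀ C : Set (Fin m → PD), IsLClass C → vset μ ν C = vset μ ν A ∩ vset μ ν B →
          UF μ ν A ∩ UF μ ν B = UF μ ν C) ∧
      (vset μ ν A ∩ vset μ ν B = ∅ → UF μ ν A ∩ UF μ ν B = ∅)) ∧
    -- (iii) U(A) is homeomorphic to the closed cube [0,1]^k
    (∀ A : Set (Fin m → PD), IsLClass A → ∀ δ ∈ A,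
      Nonempty ((UF μ ν A) ≃ₜ (Fin (stars δ) → (Set.Icc (0:ℝ) 1)))) :=
  stmt_11_general m μ ν h
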